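/- arXiv:1312.5873 — 5 statements merged into one kernel-verified Lean document; each statement's English description precedes it below -/
import Mathlib

section
/- Let f = Σ_{β ∈ I(n,d)} f_β x^β be a homogeneous polynomial of degree d in n variables with real coefficients and let r ≥ d be an integer. Then the maximum of all λ ∈ ℝ such that the polynomial (Σ_{i=1}^n x_i)^{r−d} · (f − λ(Σ_{i=1}^n x_i)^d) has only nonnegative coefficients equals min_{α ∈ I(n,r)} Σ_{β ∈ I(n,d)} f_β α^{(β)} / r^{(d)}. -/
open Finset

noncomputable section

/-- Falling factorial `t^(d) = t (t-1) ⋯ (t-d+1)`. -/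
def fall (t : ℝ) : ℕ → ℝ
  | 0 => 1
  | d + 1 => fall t d * (t - (d : ℝ))

/-- The regular grid `Δ(n,r) = {x ∈ Δ_n : r·x ∈ ℕ^n}`. -/
def regularGrid (n r : ℕ) : Set (Fin n → ℝ) :=
  {x ∈ stdSimplex ℝ (Fin n) | ∀ i, ∃ k : ℕ, (r : ℝ) * x i = (k : ℝ)}

/-- `f_{Δ(n,r)}`, the minimum of `f` over the regular grid. -/
def minGrid (n r : ℕ) (f : (Fin n → ℝ) → ℝ) : ℝ :=
  sInf (f '' regularGrid n r)

/-- `f̲`, the minimum of `f` over the standard simplex. -/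
def minSimplex (n : ℕ) (f : (Fin n → ℝ) → ℝ) : ℝ :=
  sInf (f '' stdSimplex ℝ (Fin n))

/-- `f̄`, the maximum of `f` over the standard simplex. -/
def maxSimplex (n : ℕ) (f : (Fin n → ℝ) → ℝ) : ℝ :=
  sSup (f '' stdSimplex ℝ (Fin n))

/-- The homogeneous polynomial of degree `d` with coefficients `c`,
`f(x) = Σ_{β ∈ I(n,d)} c_β x^β`. -/
def homPoly (n d : ℕ) (c : (Fin n → ℕ) → ℝ) (x : Fin n → ℝ) : ℝ :=
  ∑ β ∈ Finset.Nat.antidiagonalTuple n d, c β * ∏ i, x i ^ β i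

/-- The Pólya-type lower bound
`f_min^{(r-d)} = min_{α ∈ I(n,r)} Σ_{β ∈ I(n,d)} c_β α^{(β)} / r^{(d)}`. -/
def polyaBound (n d r : ℕ) (c : (Fin n → ℕ) → ℝ) : ℝ :=
  sInf ((fun α : Fin n → ℕ =>
      (∑ β ∈ Finset.Nat.antidiagonalTuple n d,
        c β * ∏ i, fall ((α i : ℕ) : ℝ) (β i)) / fall (r : ℝ) d) ''
    {α : Fin n → ℕ | ∑ i, α i = r})


lemma fall_natCast (a : ℕ) : ∀ d : ℕ, fall (a : ℝ) d = (a.descFactorial d : ℝ)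
  | 0 => by simp [fall]
  | d + 1 => by
    rw [fall, fall_natCast a d, Nat.descFactorial_succ]
    rcases lt_or_ge d a with h | h
    · rw [Nat.cast_mul, Nat.cast_sub h.le]; ring
    · rcases eq_or_lt_of_le h with h | h
      · subst h; simp
      · rw [Nat.descFactorial_eq_zero_iff_lt.2 h]; simp

lemma prod_X_pow (n : ℕ) (β : Fin n → ℕ) :
    (∏ i, (MvPolynomial.X i : MvPolynomial (Fin n) ℝ) ^ β i) =
      MvPolynomial.monomial (Finsupp.equivFunOnFinite.symm β) 1 := by
  rw [← MvPolynomial.prod_X_pow_eq_monomial]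
  refine (Finset.prod_subset (Finset.subset_univ _) ?_).symm
  intro x _ hx
  simp only [Finsupp.mem_support_iff, not_not] at hx
  rw [show β x = 0 from hx, pow_zero]

lemma coeff_pow_sum_X (n e : ℕ) (m : Fin n →₀ ℕ) :
    MvPolynomial.coeff m ((∑ i, MvPolynomial.X i : MvPolynomial (Fin n) ℝ) ^ e) =
      if (∑ i, m i) = e then (Nat.multinomial Finset.univ m : ℝ) else 0 := by
  rw [Finset.sum_pow_eq_sum_piAntidiag, MvPolynomial.coeff_sum]
  have : ∀ k ∈ Finset.piAntidiag Finset.univ e,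
      MvPolynomial.coeff m ((Nat.multinomial Finset.univ k : MvPolynomial (Fin n) ℝ) *
        ∏ i, MvPolynomial.X i ^ k i) =
      if Finsupp.equivFunOnFinite.symm k = m then (Nat.multinomial Finset.univ k : ℝ) else 0 := by
    intro k _
    rw [prod_X_pow, ← MvPolynomial.C_eq_coe_nat, MvPolynomial.coeff_C_mul,
      MvPolynomial.coeff_monomial]
    split <;> simp
  rw [Finset.sum_congr rfl this]
  simp_rw [Equiv.symm_apply_eq]
  rw [Finset.sum_ite_eq' (Finset.piAntidiag Finset.univ e) (Finsupp.equivFunOnFinite m)]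
  simp [Finset.mem_piAntidiag, Finsupp.equivFunOnFinite_apply]
  rfl

lemma nat_id1 (n : ℕ) (m β : Fin n → ℕ) (h : ∀ i, β i ≤ m i) :
    Nat.multinomial univ (fun i => m i - β i) * ∏ i, (m i).factorial
      = (∑ i, (m i - β i)).factorial * ∏ i, (m i).descFactorial (β i) := by
  have h1 : ∀ i ∈ univ, (m i).factorial
      = (m i - β i).factorial * (m i).descFactorial (β i) :=
    fun i _ => (Nat.factorial_mul_descFactorial (h i)).symm
  rw [Finset.prod_congr rfl h1, Finset.prod_mul_distrib, ← mul_assoc,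
    mul_comm (Nat.multinomial _ _), Nat.multinomial_spec]

lemma coeff_main (n d r : ℕ) (hrd : d ≤ r) (c : (Fin n → ℕ) → ℝ) (lam : ℝ) (m : Fin n →₀ ℕ) :
    MvPolynomial.coeff m ((∑ i, MvPolynomial.X i : MvPolynomial (Fin n) ℝ) ^ (r - d) *
        ((∑ β ∈ Finset.Nat.antidiagonalTuple n d,
            MvPolynomial.C (c β) * ∏ i, MvPolynomial.X i ^ β i) -
          MvPolynomial.C lam * (∑ i, MvPolynomial.X i) ^ d)) =
      if ∑ i, m i = r then
        (((r - d).factorial : ℝ) / (∏ i, ((m i).factorial : ℝ))) *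
          ((∑ β ∈ Finset.Nat.antidiagonalTuple n d, c β * ∏ i, fall ((m i : ℕ) : ℝ) (β i))
            - lam * fall (r : ℝ) d)
      else 0 := by
  have hfac : (∏ i, ((m i).factorial : ℝ)) ≠ 0 :=
    Finset.prod_ne_zero_iff.2 fun i _ => Nat.cast_ne_zero.2 (Nat.factorial_ne_zero _)
  rw [mul_sub, MvPolynomial.coeff_sub]
  have h2 : ((∑ i, MvPolynomial.X i : MvPolynomial (Fin n) ℝ) ^ (r - d) *
      (MvPolynomial.C lam * (∑ i, MvPolynomial.X i) ^ d))
      = MvPolynomial.C lam * (∑ i, MvPolynomial.X i) ^ r := by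
    rw [mul_left_comm, ← pow_add, Nat.sub_add_cancel hrd]
  rw [h2, MvPolynomial.coeff_C_mul, coeff_pow_sum_X]
  rw [Finset.mul_sum, MvPolynomial.coeff_sum]
  have h3 : ∀ β ∈ Finset.Nat.antidiagonalTuple n d,
      MvPolynomial.coeff m ((∑ i, MvPolynomial.X i : MvPolynomial (Fin n) ℝ) ^ (r - d) *
        (MvPolynomial.C (c β) * ∏ i, MvPolynomial.X i ^ β i)) =
      c β * (if Finsupp.equivFunOnFinite.symm β ≤ m then
        MvPolynomial.coeff (m - Finsupp.equivFunOnFinite.symm β)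
          ((∑ i, MvPolynomial.X i : MvPolynomial (Fin n) ℝ) ^ (r - d)) else 0) := by
    intro β _
    rw [mul_left_comm, MvPolynomial.coeff_C_mul, prod_X_pow,
      MvPolynomial.coeff_mul_monomial']
    split <;> simp
  rw [Finset.sum_congr rfl h3]
  by_cases h : ∑ i, m i = r
  · rw [if_pos h, if_pos h]
    have key : ∀ β ∈ Finset.Nat.antidiagonalTuple n d,
        (if Finsupp.equivFunOnFinite.symm β ≤ m then
          MvPolynomial.coeff (m - Finsupp.equivFunOnFinite.symm β)
            ((∑ i, MvPolynomial.X i : MvPolynomial (Fin n) ℝ) ^ (r - d)) else 0) =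
        (((r - d).factorial : ℝ) / (∏ i, ((m i).factorial : ℝ))) *
          ∏ i, fall ((m i : ℕ) : ℝ) (β i) := by
      intro β hβ
      rw [Finset.Nat.mem_antidiagonalTuple] at hβ
      by_cases hb : ∀ i, β i ≤ m i
      · have hle : Finsupp.equivFunOnFinite.symm β ≤ m := by
          intro i; exact hb i
        have hcoe : ∀ i, (m - Finsupp.equivFunOnFinite.symm β) i = m i - β i := by
          intro i; simp [Finsupp.tsub_apply]
        rw [if_pos hle, coeff_pow_sum_X]
        have hsum : ∑ i, (m i - β i) = r - d := by
          rw [Finset.sum_tsub_distrib univ (fun i _ => hb i), h, hβ]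
        have hsum' : ∑ i, (m - Finsupp.equivFunOnFinite.symm β) i = r - d := by
          simp_rw [hcoe]; exact hsum
        rw [if_pos hsum']
        have hmult : Nat.multinomial univ ⇑(m - Finsupp.equivFunOnFinite.symm β)
            = Nat.multinomial univ (fun i => m i - β i) := by
          rw [show ⇑(m - Finsupp.equivFunOnFinite.symm β) = fun i => m i - β i from funext hcoe]
        have hid := nat_id1 n (⇑m) β hb
        rw [hsum] at hid
        have hfall : ∀ i, fall ((m i : ℕ) : ℝ) (β i) = ((m i).descFactorial (β i) : ℝ) :=
          fun i => fall_natCast _ _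
        simp_rw [hfall, hmult]
        field_simp
        exact_mod_cast hid
      · push_neg at hb
        obtain ⟨i, hi⟩ := hb
        have : ¬ Finsupp.equivFunOnFinite.symm β ≤ m := by
          intro hle; exact absurd (hle i) (not_le.2 hi)
        rw [if_neg this]
        have hz0 : fall ((m i : ℕ) : ℝ) (β i) = 0 := by
          rw [fall_natCast, Nat.descFactorial_of_lt hi, Nat.cast_zero]
        have hz : ∏ i, fall ((m i : ℕ) : ℝ) (β i) = 0 :=
          Finset.prod_eq_zero (Finset.mem_univ i) hz0
        rw [hz, mul_zero]
    have hB : (Nat.multinomial univ ⇑m : ℝ) =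
        (((r - d).factorial : ℝ) / (∏ i, ((m i).factorial : ℝ))) * fall (r : ℝ) d := by
      have h1 : (∏ i, ((m i).factorial)) * Nat.multinomial univ ⇑m = r.factorial := by
        rw [Nat.multinomial_spec]; rw [h]
      have h2 : (r - d).factorial * r.descFactorial d = r.factorial :=
        Nat.factorial_mul_descFactorial hrd
      have h3n : Nat.multinomial univ ⇑m * ∏ i, (m i).factorial
          = (r - d).factorial * r.descFactorial d := by
        rw [mul_comm, h1, h2]
      rw [fall_natCast]
      field_simp
      exact_mod_cast h3n
    rw [Finset.sum_congr rfl (fun β hβ => by rw [key β hβ]), hB]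
    rw [mul_sub, Finset.mul_sum]
    congr 1
    · exact Finset.sum_congr rfl (fun β _ => by ring)
    · ring
  · rw [if_neg h, if_neg h]
    have key : ∀ β ∈ Finset.Nat.antidiagonalTuple n d,
        c β * (if Finsupp.equivFunOnFinite.symm β ≤ m then
          MvPolynomial.coeff (m - Finsupp.equivFunOnFinite.symm β)
            ((∑ i, MvPolynomial.X i : MvPolynomial (Fin n) ℝ) ^ (r - d)) else 0) = 0 := by
      intro β hβ
      rw [Finset.Nat.mem_antidiagonalTuple] at hβ
      by_cases hle : Finsupp.equivFunOnFinite.symm β ≤ m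
      · have hb : ∀ i, β i ≤ m i := fun i => hle i
        rw [if_pos hle, coeff_pow_sum_X]
        have hcoe : ∀ i, (m - Finsupp.equivFunOnFinite.symm β) i = m i - β i := by
          intro i; simp [Finsupp.tsub_apply]
        have hne : ¬ (∑ i, (m - Finsupp.equivFunOnFinite.symm β) i = r - d) := by
          simp_rw [hcoe]
          rw [Finset.sum_tsub_distrib univ (fun i _ => hb i), hβ]
          intro hc
          have hd : d ≤ ∑ i, m i := hβ ▸ Finset.sum_le_sum (fun i _ => hb i)
          omega
        rw [if_neg hne, mul_zero]
      · rw [if_neg hle, mul_zero]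
    rw [Finset.sum_congr rfl key]
    simp

/-- the maximum λ such that `(Σ x_i)^{r-d} (f − λ (Σ x_i)^d)` has only
nonnegative coefficients equals `min_{α ∈ I(n,r)} Σ_{β ∈ I(n,d)} f_β α^{(β)} / r^{(d)}`. -/
theorem statement0 (n d r : ℕ) (hn : 0 < n) (hrd : d ≤ r) (c : (Fin n → ℕ) → ℝ) :
    IsGreatest
      {lam : ℝ | ∀ m : Fin n →₀ ℕ,
        0 ≤ MvPolynomial.coeff m
          ((∑ i, MvPolynomial.X i : MvPolynomial (Fin n) ℝ) ^ (r - d) *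
            ((∑ β ∈ Finset.Nat.antidiagonalTuple n d,
                MvPolynomial.C (c β) * ∏ i, MvPolynomial.X i ^ β i) -
              MvPolynomial.C lam * (∑ i, MvPolynomial.X i) ^ d))}
      (polyaBound n d r c) := by
  unfold polyaBound
  set g : (Fin n → ℕ) → ℝ := fun α : Fin n → ℕ =>
      (∑ β ∈ Finset.Nat.antidiagonalTuple n d,
        c β * ∏ i, fall ((α i : ℕ) : ℝ) (β i)) / fall (r : ℝ) d with hg
  have hfrd : (0:ℝ) < fall (r:ℝ) d := by
    rw [fall_natCast]
    exact_mod_cast Nat.pos_of_ne_zero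
      (fun hz => absurd (Nat.descFactorial_eq_zero_iff_lt.1 hz) (not_lt.2 hrd))
  have hset : {α : Fin n → ℕ | ∑ i, α i = r} = ↑(Finset.Nat.antidiagonalTuple n r) := by
    ext α; simp [Finset.Nat.mem_antidiagonalTuple]
  have hne : (Finset.Nat.antidiagonalTuple n r).Nonempty := by
    refine ⟨Pi.single ⟨0, hn⟩ r, ?_⟩
    rw [Finset.Nat.mem_antidiagonalTuple]
    simp
  have hTfin : (g '' {α : Fin n → ℕ | ∑ i, α i = r}).Finite := by
    rw [hset]; exact ((Finset.Nat.antidiagonalTuple n r).finite_toSet).image g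
  have hTne : (g '' {α : Fin n → ℕ | ∑ i, α i = r}).Nonempty := by
    rw [hset]; exact (hne.to_set).image g
  have hbdd : BddBelow (g '' {α : Fin n → ℕ | ∑ i, α i = r}) := hTfin.bddBelow
  have hiff : ∀ lam : ℝ,
      (∀ m : Fin n →₀ ℕ,
        0 ≤ MvPolynomial.coeff m
          ((∑ i, MvPolynomial.X i : MvPolynomial (Fin n) ℝ) ^ (r - d) *
            ((∑ β ∈ Finset.Nat.antidiagonalTuple n d,
                MvPolynomial.C (c β) * ∏ i, MvPolynomial.X i ^ β i) -
              MvPolynomial.C lam * (∑ i, MvPolynomial.X i) ^ d))) ↔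
      ∀ α : Fin n → ℕ, ∑ i, α i = r → lam ≤ g α := by
    intro lam
    constructor
    · intro hl α hα
      have h0 := hl (Finsupp.equivFunOnFinite.symm α)
      rw [coeff_main n d r hrd c lam _] at h0
      have hs : ∑ i, (Finsupp.equivFunOnFinite.symm α) i = r := hα
      rw [if_pos hs] at h0
      have hK : (0:ℝ) < ((r - d).factorial : ℝ) /
          (∏ i, (((Finsupp.equivFunOnFinite.symm α) i).factorial : ℝ)) := by
        apply div_pos
        · exact_mod_cast Nat.factorial_pos _
        · exact Finset.prod_pos fun i _ => by exact_mod_cast Nat.factorial_pos _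
      have h1 : (0:ℝ) ≤ (∑ β ∈ Finset.Nat.antidiagonalTuple n d,
          c β * ∏ i, fall (((Finsupp.equivFunOnFinite.symm α) i : ℕ) : ℝ) (β i))
          - lam * fall (r : ℝ) d := nonneg_of_mul_nonneg_right h0 hK
      rw [hg]
      rw [le_div_iff₀ hfrd]
      have heq : (∑ β ∈ Finset.Nat.antidiagonalTuple n d,
          c β * ∏ i, fall (((Finsupp.equivFunOnFinite.symm α) i : ℕ) : ℝ) (β i))
          = ∑ β ∈ Finset.Nat.antidiagonalTuple n d,
          c β * ∏ i, fall ((α i : ℕ) : ℝ) (β i) := rfl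
      rw [heq] at h1
      linarith
    · intro hl m
      rw [coeff_main n d r hrd c lam m]
      split_ifs with h
      · have hgm := hl (⇑m) h
        rw [hg, le_div_iff₀ hfrd] at hgm
        have hK : (0:ℝ) ≤ ((r - d).factorial : ℝ) / (∏ i, ((m i).factorial : ℝ)) := by
          positivity
        have : (0:ℝ) ≤ (∑ β ∈ Finset.Nat.antidiagonalTuple n d,
            c β * ∏ i, fall ((m i : ℕ) : ℝ) (β i)) - lam * fall (r : ℝ) d := by
          linarith
        exact mul_nonneg hK this
      · exact le_refl 0
  constructor
  · intro m
    rw [coeff_main n d r hrd c _ m]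
    have hmem : ∀ α : Fin n → ℕ, ∑ i, α i = r →
        sInf (g '' {α : Fin n → ℕ | ∑ i, α i = r}) ≤ g α := by
      intro α hα
      exact csInf_le hbdd ⟨α, hα, rfl⟩
    exact ((hiff _).2 hmem) m |>.trans_eq (by rw [coeff_main n d r hrd c _ m])
  · intro lam hlam
    refine le_csInf hTne ?_
    rintro b ⟨α, hα, rfl⟩
    exact (hiff lam).1 hlam α hα
end
end

section
/- Let f(x) = x^T Q x where Q is a real symmetric n×n matrix, let r ≥ 2 be an integer, and let Q_max = max_{i ∈ [n]} Q_{ii}. Then f_{Δ(n,r)} − f_min^{(r−2)} ≤ (1/(r−1)) (Q_max − f_{Δ(n,r)}) ≤ (1/(r−1)) (f̄ − f̲). -/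
/-!
Every grid point is `α / r` with `α ∈ I(n,r)`, and `f(α / r) = αᵀQα / r²`, so
`r² f_{Δ(n,r)} ≤ αᵀQα`; together with `Σ Q_ii α_i ≤ r Q_max` this bounds every term of the
Pólya minimum below by `(r f_{Δ(n,r)} − Q_max) / (r − 1)`, which rearranges to the first
inequality. The second holds because `Q_max = max_i f(e_i) ≤ f̄` and `f̲ ≤ f_{Δ(n,r)}`.
-/

open Finset

noncomputable section

/-- The quadratic form `f(x) = xᵀ Q x`. -/
def quadForm (n : ℕ) (Q : Matrix (Fin n) (Fin n) ℝ) (x : Fin n → ℝ) : ℝ :=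
  ∑ i, ∑ j, Q i j * x i * x j

/-- The Pólya-type lower bound for the quadratic form `xᵀQx`:
`f_min^{(r-2)} = min_{α ∈ I(n,r)} [αᵀQα − Σ_i Q_ii α_i] / (r(r−1))`. -/
def quadPolya (n r : ℕ) (Q : Matrix (Fin n) (Fin n) ℝ) : ℝ :=
  sInf ((fun α : Fin n → ℕ =>
      ((∑ i, ∑ j, Q i j * (α i : ℝ) * (α j : ℝ)) - ∑ i, Q i i * (α i : ℝ)) /
        ((r : ℝ) * ((r : ℝ) - 1))) ''
    {α : Fin n → ℕ | ∑ i, α i = r})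

section RegularGrid

variable {n r : ℕ}

lemma regularGrid_subset_stdSimplex : regularGrid n r ⊆ stdSimplex ℝ (Fin n) :=
  fun _ hx => hx.1

lemma inv_smul_mem_regularGrid (hr : 0 < r) {α : Fin n → ℕ} (hα : ∑ i, α i = r) :
    (r : ℝ)⁻¹ • (fun i => (α i : ℝ)) ∈ regularGrid n r := by
  have hr' : (r : ℝ) ≠ 0 := by positivity
  refine ⟨⟨fun i => by simp only [Pi.smul_apply, smul_eq_mul]; positivity, ?_⟩,
    fun i => ⟨α i, by simp [hr']⟩⟩
  simp only [Pi.smul_apply, smul_eq_mul, ← Finset.mul_sum]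
  rw [← Nat.cast_sum, hα, inv_mul_cancel₀ hr']

lemma regularGrid_nonempty (hn : 0 < n) (hr : 0 < r) : (regularGrid n r).Nonempty := by
  classical
  exact ⟨_, inv_smul_mem_regularGrid hr (α := Pi.single ⟨0, hn⟩ r) (by simp)⟩

end RegularGrid

section QuadForm

variable {n : ℕ} (Q : Matrix (Fin n) (Fin n) ℝ)

lemma continuous_quadForm : Continuous (quadForm n Q) := by
  unfold quadForm
  fun_prop

lemma quadForm_smul (c : ℝ) (x : Fin n → ℝ) :
    quadForm n Q (c • x) = c ^ 2 * quadForm n Q x := by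
  simp only [quadForm, Pi.smul_apply, smul_eq_mul, Finset.mul_sum]
  exact Finset.sum_congr rfl fun _ _ => Finset.sum_congr rfl fun _ _ => by ring

lemma quadForm_single [DecidableEq (Fin n)] (i : Fin n) :
    quadForm n Q (Pi.single i 1) = Q i i := by
  simp [quadForm, Pi.single_apply]

lemma sum_diag_mul_le {x : Fin n → ℝ} (hx : ∀ i, 0 ≤ x i) :
    ∑ i, Q i i * x i ≤ sSup (Set.range fun i => Q i i) * ∑ i, x i := by
  rw [Finset.mul_sum]
  gcongr with i
  · exact hx i
  · exact le_csSup (Set.finite_range (fun i => Q i i)).bddAbove ⟨i, rfl⟩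

lemma bddBelow_quadForm_image_regularGrid (r : ℕ) :
    BddBelow (quadForm n Q '' regularGrid n r) :=
  ((isCompact_stdSimplex ℝ (Fin n)).bddBelow_image (f := quadForm n Q)
    (continuous_quadForm Q).continuousOn).mono (Set.image_mono regularGrid_subset_stdSimplex)

lemma minGrid_mul_sq_le {r : ℕ} (hr : 0 < r) {α : Fin n → ℕ} (hα : ∑ i, α i = r) :
    minGrid n r (quadForm n Q) * (r : ℝ) ^ 2 ≤ quadForm n Q (fun i => (α i : ℝ)) := by
  have hmem := Set.mem_image_of_mem (quadForm n Q) (inv_smul_mem_regularGrid hr hα)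
  have hle := csInf_le (bddBelow_quadForm_image_regularGrid Q r) hmem
  rwa [quadForm_smul, inv_pow, le_inv_mul_iff₀ (by positivity), mul_comm] at hle

lemma le_quadPolya (hn : 0 < n) {r : ℕ} (hr : 2 ≤ r) :
    ((r : ℝ) * minGrid n r (quadForm n Q) - sSup (Set.range fun i => Q i i)) / ((r : ℝ) - 1) ≤
      quadPolya n r Q := by
  classical
  have hr1 : (1 : ℝ) < r := by exact_mod_cast hr
  refine le_csInf ⟨_, Pi.single ⟨0, hn⟩ r, by simp, rfl⟩ ?_
  rintro _ ⟨α, hα, rfl⟩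
  have hα : ∑ i, α i = r := hα
  have hgrid := minGrid_mul_sq_le Q (by omega) hα
  have hdiag := sum_diag_mul_le Q (x := fun i => (α i : ℝ)) fun i => by positivity
  rw [← Nat.cast_sum, hα] at hdiag
  change _ ≤ (quadForm n Q (fun i => (α i : ℝ)) - _) / _
  rw [div_le_div_iff₀ (by linarith) (by nlinarith)]
  nlinarith

lemma sSup_diag_le_maxSimplex (hn : 0 < n) :
    sSup (Set.range fun i => Q i i) ≤ maxSimplex n (quadForm n Q) := by
  classical
  refine csSup_le ⟨_, ⟨⟨0, hn⟩, rfl⟩⟩ ?_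
  rintro _ ⟨i, rfl⟩
  show Q i i ≤ _
  rw [← quadForm_single Q i]
  exact le_csSup ((isCompact_stdSimplex ℝ (Fin n)).bddAbove_image
    (continuous_quadForm Q).continuousOn) ⟨_, single_mem_stdSimplex ℝ i, rfl⟩

lemma minSimplex_le_minGrid (hn : 0 < n) {r : ℕ} (hr : 0 < r) :
    minSimplex n (quadForm n Q) ≤ minGrid n r (quadForm n Q) :=
  csInf_le_csInf ((isCompact_stdSimplex ℝ (Fin n)).bddBelow_image
      (continuous_quadForm Q).continuousOn)
    ((regularGrid_nonempty hn hr).image _) (Set.image_mono regularGrid_subset_stdSimplex)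

end QuadForm

theorem statement1_general (n r : ℕ) (hn : 0 < n) (hr : 2 ≤ r)
    (Q : Matrix (Fin n) (Fin n) ℝ) :
    minGrid n r (quadForm n Q) - quadPolya n r Q ≤
        (1 / ((r : ℝ) - 1)) * (sSup (Set.range fun i => Q i i) - minGrid n r (quadForm n Q)) ∧
      (1 / ((r : ℝ) - 1)) * (sSup (Set.range fun i => Q i i) - minGrid n r (quadForm n Q)) ≤
        (1 / ((r : ℝ) - 1)) * (maxSimplex n (quadForm n Q) - minSimplex n (quadForm n Q)) := by
  have hr1 : (0 : ℝ) < (r : ℝ) - 1 := by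
    have : (2 : ℝ) ≤ r := by exact_mod_cast hr
    linarith
  constructor
  · have hpolya := le_quadPolya Q hn hr
    rw [div_le_iff₀ hr1] at hpolya
    rw [one_div_mul_eq_div, le_div_iff₀ hr1]
    nlinarith
  · gcongr
    · exact sSup_diag_le_maxSimplex Q hn
    · exact minSimplex_le_minGrid Q hn (by omega)

/-- for `f(x) = xᵀQx`, `Q` symmetric and `r ≥ 2`,
`f_{Δ(n,r)} − f_min^{(r−2)} ≤ (1/(r−1))(Q_max − f_{Δ(n,r)}) ≤ (1/(r−1))(f̄ − f̲)`. -/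
theorem statement1 (n r : ℕ) (hn : 0 < n) (hr : 2 ≤ r)
    (Q : Matrix (Fin n) (Fin n) ℝ) (hQ : Q.IsSymm) :
    minGrid n r (quadForm n Q) - quadPolya n r Q ≤
        (1 / ((r : ℝ) - 1)) * (sSup (Set.range fun i => Q i i) - minGrid n r (quadForm n Q)) ∧
      (1 / ((r : ℝ) - 1)) * (sSup (Set.range fun i => Q i i) - minGrid n r (quadForm n Q)) ≤
        (1 / ((r : ℝ) - 1)) * (maxSimplex n (quadForm n Q) - minSimplex n (quadForm n Q)) :=
  statement1_general n r hn hr Q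
end
end

section
/- Let f be a homogeneous polynomial of degree 2 in n variables with real coefficients and let r ≥ 2 be an integer. Then f_{Δ(n,r)} − f̲ ≤ (1/r) (f̄ − f̲). -/
/-! Let `σ : Fin r → Fin n` record `r` independent draws from the distribution `x ∈ Δ_n`. The
empirical mean `y = (1/r) Σ_m e_{σ m}` lies on `Δ(n,r)`. For a quadratic form `Q` with bilinear
form `B`, `Q y = r⁻² Σ_{k,l} B(e_{σ k}, e_{σ l})`; by independence each of the `r² - r` cross
terms averages to `Q x`, while each of the `r` diagonal terms averages to `Σ_i x_i Q e_i ≤ f̄`.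
So some grid point has `Q y ≤ (1 - 1/r) Q x + f̄ / r`, and taking `x` a minimiser of `Q` on `Δ_n`
gives `f_{Δ(n,r)} ≤ (1 - 1/r) f̲ + f̄ / r`. -/

open Finset

noncomputable section

section ProductWeights

variable {ι κ R : Type*} [Fintype ι] [DecidableEq ι] [Fintype κ] [CommSemiring R]

theorem sum_prod_mul_eq_sum_mul_sum_subtype_ne (x : κ → R) (k : ι)
    (F : κ → ({m // m ≠ k} → κ) → R) :
    ∑ σ : ι → κ, (∏ m, x (σ m)) * F (σ k) (fun m => σ m) =
      ∑ a, x a * ∑ τ : {m // m ≠ k} → κ, (∏ m, x (τ m)) * F a τ := by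
  simp_rw [mul_sum, ← Fintype.sum_prod_type', ← mul_assoc]
  exact Fintype.sum_equiv (Equiv.funSplitAt k κ) _ _ fun σ => by
    rw [Fintype.prod_eq_mul_prod_subtype_ne _ k]; rfl

theorem sum_prod_eq_one {x : κ → R} (hx : ∑ a, x a = 1) :
    ∑ σ : ι → κ, ∏ m, x (σ m) = 1 := by
  rw [← Fintype.prod_sum, hx, prod_const_one]

theorem sum_prod_mul_apply {x : κ → R} (hx : ∑ a, x a = 1) (k : ι) (h : κ → R) :
    ∑ σ : ι → κ, (∏ m, x (σ m)) * h (σ k) = ∑ a, x a * h a := by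
  rw [sum_prod_mul_eq_sum_mul_sum_subtype_ne x k fun a _ => h a]
  simp_rw [← sum_mul, sum_prod_eq_one hx, one_mul]

theorem sum_prod_mul_apply_apply {x : κ → R} (hx : ∑ a, x a = 1) {k l : ι} (hkl : k ≠ l)
    (g : κ → κ → R) :
    ∑ σ : ι → κ, (∏ m, x (σ m)) * g (σ k) (σ l) = ∑ a, ∑ b, x a * x b * g a b := by
  rw [sum_prod_mul_eq_sum_mul_sum_subtype_ne x k fun a τ => g a (τ ⟨l, hkl.symm⟩)]
  simp_rw [sum_prod_mul_apply hx, mul_sum, mul_assoc]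

end ProductWeights

theorem exists_le_sum_mul_of_sum_eq_one {ι : Type*} [Fintype ι] {w : ι → ℝ} (hw₀ : ∀ i, 0 ≤ w i)
    (hw₁ : ∑ i, w i = 1) (F : ι → ℝ) : ∃ i, F i ≤ ∑ j, w j * F j := by
  have hne : (univ : Finset ι).Nonempty := nonempty_of_sum_ne_zero (hw₁.symm ▸ one_ne_zero)
  obtain ⟨i, -, hi⟩ := univ.exists_min_image F hne
  refine ⟨i, ?_⟩
  calc F i = ∑ j, w j * F i := by rw [← sum_mul, hw₁, one_mul]
    _ ≤ ∑ j, w j * F j :=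
      sum_le_sum fun j hj => mul_le_mul_of_nonneg_left (hi j hj) (hw₀ j)

namespace QuadraticMap

variable {ι κ R M : Type*} [Fintype ι] [Fintype κ] [CommRing R] [Invertible (2 : R)]
  [AddCommGroup M] [Module R M]

theorem map_sum_eq_sum_sum_associated (Q : QuadraticMap R M R) (u : ι → M) :
    Q (∑ k, u k) = ∑ k, ∑ l, associated Q (u k) (u l) := by
  rw [← associated_eq_self_apply R Q, sum_comm]
  simp_rw [map_sum, LinearMap.sum_apply]

variable [DecidableEq ι]

theorem sum_prod_mul_map_sum (Q : QuadraticMap R M R) {x : κ → R} (hx : ∑ a, x a = 1)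
    (v : κ → M) :
    ∑ σ : ι → κ, (∏ m, x (σ m)) * Q (∑ m, v (σ m)) =
      ((Fintype.card ι : R) ^ 2 - Fintype.card ι) * Q (∑ a, x a • v a) +
        Fintype.card ι * ∑ a, x a * Q (v a) := by
  -- shaped so that the sum over `l` is closed by `sum_ite_eq`
  have hmoment : ∀ k l : ι, ∑ σ : ι → κ, (∏ m, x (σ m)) * associated Q (v (σ k)) (v (σ l)) =
      Q (∑ a, x a • v a) + if k = l then ∑ a, x a * Q (v a) - Q (∑ a, x a • v a) else 0 := by
    intro k l
    split_ifs with hkl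
    · subst hkl
      simp_rw [associated_eq_self_apply, add_sub_cancel]
      exact sum_prod_mul_apply hx k fun a => Q (v a)
    · rw [sum_prod_mul_apply_apply hx hkl fun a b => associated Q (v a) (v b),
        map_sum_eq_sum_sum_associated, add_zero]
      simp only [map_smul, LinearMap.smul_apply, smul_eq_mul]
      exact sum_congr rfl fun a _ => sum_congr rfl fun b _ => by ring
  calc ∑ σ : ι → κ, (∏ m, x (σ m)) * Q (∑ m, v (σ m))
      = ∑ k, ∑ l, ∑ σ : ι → κ, (∏ m, x (σ m)) * associated Q (v (σ k)) (v (σ l)) := by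
        simp_rw [map_sum_eq_sum_sum_associated, mul_sum]
        rw [sum_comm]; simp_rw [sum_comm (γ := ι → κ)]
    _ = _ := by
        simp_rw [hmoment, sum_add_distrib, sum_ite_eq, mem_univ, if_true, sum_const, card_univ,
          nsmul_eq_mul]
        ring

end QuadraticMap

theorem exists_prod_pow_eq_mul_of_sum_eq_two {ι M : Type*} [Fintype ι] [CommMonoid M]
    (β : ι → ℕ) (hβ : ∑ i, β i = 2) : ∃ a b : ι, ∀ z : ι → M, ∏ i, z i ^ β i = z a * z b := by
  set S : Multiset ι := univ.val.bind fun i => Multiset.replicate (β i) i with hS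
  have hcard : Multiset.card S = 2 := by
    rw [hS, Multiset.card_bind]
    simpa using hβ
  obtain ⟨a, b, hab⟩ := Multiset.card_eq_two.mp hcard
  refine ⟨a, b, fun z => ?_⟩
  have hprod : (S.map z).prod = ∏ i, z i ^ β i := by
    rw [hS, Multiset.map_bind, Multiset.prod_bind]
    simp [Multiset.map_replicate, Multiset.prod_replicate]
  rw [← hprod, hab]
  simp

theorem exists_quadraticMap_eq_homPoly (n : ℕ) (c : (Fin n → ℕ) → ℝ) :
    ∃ Q : QuadraticMap ℝ (Fin n → ℝ) ℝ, ⇑Q = homPoly n 2 c := by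
  have hsum : homPoly n 2 c =
      ∑ β ∈ Finset.Nat.antidiagonalTuple n 2, fun z => c β * ∏ i, z i ^ β i := by
    ext z
    simp [homPoly, Finset.sum_apply]
  rw [hsum]
  refine Finset.sum_induction _ (fun f => ∃ Q : QuadraticMap ℝ (Fin n → ℝ) ℝ, ⇑Q = f)
    (fun _ _ ⟨Q₁, h₁⟩ ⟨Q₂, h₂⟩ => ⟨Q₁ + Q₂, by rw [FunLike.coe_add, h₁, h₂]⟩)
    ⟨0, rfl⟩ fun β hβ => ?_
  obtain ⟨a, b, hab⟩ :=
    exists_prod_pow_eq_mul_of_sum_eq_two (M := ℝ) β (Finset.Nat.mem_antidiagonalTuple.mp hβ)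
  refine ⟨c β • QuadraticMap.linMulLin (LinearMap.proj a) (LinearMap.proj b), ?_⟩
  ext z
  simp [hab]

theorem continuous_homPoly (n d : ℕ) (c : (Fin n → ℕ) → ℝ) : Continuous (homPoly n d c) := by
  unfold homPoly
  fun_prop

theorem smul_sum_single_mem_regularGrid {n r : ℕ} (hr : 0 < r) (σ : Fin r → Fin n) :
    (r : ℝ)⁻¹ • ∑ m, Pi.single (σ m) (1 : ℝ) ∈ regularGrid n r := by
  have hr' : (r : ℝ) ≠ 0 := by positivity
  refine ⟨⟨fun i => ?_, ?_⟩, fun i => ⟨#{m | σ m = i}, ?_⟩⟩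
  · simp only [Pi.smul_apply, Finset.sum_apply, smul_eq_mul]
    exact mul_nonneg (by positivity) (sum_nonneg fun m _ => by rw [Pi.single_apply]; positivity)
  · simp_rw [Pi.smul_apply, Finset.sum_apply, smul_eq_mul, ← mul_sum]
    rw [sum_comm]
    simp [hr']
  · simp [Pi.single_apply, Finset.sum_boole, hr', eq_comm]

theorem QuadraticMap.exists_mem_regularGrid_le {n r : ℕ} (Q : QuadraticMap ℝ (Fin n → ℝ) ℝ)
    (hr : 0 < r) {x : Fin n → ℝ} (hx : x ∈ stdSimplex ℝ (Fin n)) :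
    ∃ y ∈ regularGrid n r,
      Q y ≤ (1 - 1 / (r : ℝ)) * Q x + 1 / (r : ℝ) * ∑ i, x i * Q (Pi.single i 1) := by
  set y : (Fin r → Fin n) → Fin n → ℝ := fun σ => (r : ℝ)⁻¹ • ∑ m, Pi.single (σ m) 1
  have havg : ∑ σ, (∏ m, x (σ m)) * Q (y σ) =
      (1 - 1 / (r : ℝ)) * Q x + 1 / (r : ℝ) * ∑ i, x i * Q (Pi.single i 1) := by
    have hr' : (r : ℝ) ≠ 0 := by positivity
    simp only [y, QuadraticMap.map_smul, smul_eq_mul]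
    simp_rw [mul_left_comm _ ((r : ℝ)⁻¹ * (r : ℝ)⁻¹), ← mul_sum,
      Q.sum_prod_mul_map_sum hx.2 fun i => Pi.single i 1, ← pi_eq_sum_univ' x, Fintype.card_fin]
    field_simp
  obtain ⟨σ, hσ⟩ := exists_le_sum_mul_of_sum_eq_one
    (fun σ => prod_nonneg fun m _ => hx.1 (σ m)) (sum_prod_eq_one hx.2) (fun σ => Q (y σ))
  exact ⟨y σ, smul_sum_single_mem_regularGrid hr σ, havg ▸ hσ⟩

section Simplex

variable {n : ℕ} {f : (Fin n → ℝ) → ℝ}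

theorem exists_eq_minSimplex (hn : 0 < n) (hf : Continuous f) :
    ∃ x ∈ stdSimplex ℝ (Fin n), f x = minSimplex n f :=
  ((isCompact_stdSimplex ℝ (Fin n)).image hf).sInf_mem
    ⟨_, Set.mem_image_of_mem f (single_mem_stdSimplex ℝ ⟨0, hn⟩)⟩

theorem le_maxSimplex (hf : Continuous f) {x : Fin n → ℝ} (hx : x ∈ stdSimplex ℝ (Fin n)) :
    f x ≤ maxSimplex n f :=
  le_csSup ((isCompact_stdSimplex ℝ (Fin n)).image hf).bddAbove ⟨x, hx, rfl⟩

theorem sum_mul_le_maxSimplex (hf : Continuous f) {x : Fin n → ℝ}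
    (hx : x ∈ stdSimplex ℝ (Fin n)) : ∑ i, x i * f (Pi.single i 1) ≤ maxSimplex n f :=
  calc ∑ i, x i * f (Pi.single i 1) ≤ ∑ i, x i * maxSimplex n f :=
        sum_le_sum fun i _ =>
          mul_le_mul_of_nonneg_left (le_maxSimplex hf (single_mem_stdSimplex ℝ i)) (hx.1 i)
    _ = maxSimplex n f := by rw [← sum_mul, hx.2, one_mul]

theorem minGrid_le (hf : Continuous f) {r : ℕ} {y : Fin n → ℝ} (hy : y ∈ regularGrid n r) :
    minGrid n r f ≤ f y :=
  csInf_le (((isCompact_stdSimplex ℝ (Fin n)).image hf).bddBelow.mono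
    (Set.image_mono fun _ hz => hz.1)) ⟨y, hy, rfl⟩

end Simplex

/-- for `f` homogeneous of degree 2 and `r ≥ 2`,
`f_{Δ(n,r)} − f̲ ≤ (1/r)(f̄ − f̲)`. -/
theorem statement4 (n r : ℕ) (hn : 0 < n) (hr : 2 ≤ r) (c : (Fin n → ℕ) → ℝ) :
    minGrid n r (homPoly n 2 c) - minSimplex n (homPoly n 2 c) ≤
      (1 / (r : ℝ)) * (maxSimplex n (homPoly n 2 c) - minSimplex n (homPoly n 2 c)) := by
  have hf := continuous_homPoly n 2 c
  obtain ⟨Q, hQ⟩ := exists_quadraticMap_eq_homPoly n c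
  obtain ⟨x, hx, hxmin⟩ := exists_eq_minSimplex hn hf
  obtain ⟨y, hy, hQy⟩ := Q.exists_mem_regularGrid_le (by omega : 0 < r) hx
  rw [hQ] at hQy
  have hmax := mul_le_mul_of_nonneg_left (sum_mul_le_maxSimplex hf hx)
    (by positivity : (0 : ℝ) ≤ 1 / r)
  rw [← hxmin]
  linarith [minGrid_le hf hy]
end
end

section
/- Let f be a homogeneous cubic polynomial in n variables with real coefficients and let r ≥ 3 be an integer. Then f̲ − f_min^{(r−3)} ≤ (4r/((r−1)(r−2))) (f̄ − f̲). -/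
open Finset

noncomputable section

/-!
Write `α ∈ I(n,r)` as `α = r x` with `x ∈ Δ_n`. A cubic exponent `β` has at most one entry
`≥ 2`, and `α^{(β)}` differs from `α^β` only in that entry; collecting these corrections gives
`Σ_β f_β α^{(β)} = r³ f(x) - r² q(x) + 2 r L(x)` with `L(x) = Σ_i f_{3e_i} x_i` and
`q(x) = Σ_{i ≠ j} f_{2e_i+e_j} x_i x_j + 3 Σ_i f_{3e_i} x_i²`. Evaluating `f` at the vertices and
at the edge midpoints of `Δ_n` gives `f̲ ≤ f_{3e_i} ≤ f̄` and
`f_{3e_i} + f_{3e_j} + f_{2e_i+e_j} + f_{2e_j+e_i} ≤ 8 f̄`, hence `L(x) ≥ f̲` and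
`q(x) ≤ 4 f̄ - f̲`. Dividing by `r^{(3)} = r (r-1) (r-2)` gives the bound at every `α`.
-/

theorem fall_of_le_one (t : ℝ) {b : ℕ} (hb : b ≤ 1) : fall t b = t ^ b := by
  interval_cases b <;> simp [fall]

theorem fall_two (t : ℝ) : fall t 2 = t * (t - 1) := by
  simp [fall]

theorem fall_three (t : ℝ) : fall t 3 = t * (t - 1) * (t - 2) := by
  simp [fall]

theorem Finset.prod_sub_prod_eq_sum_of_eq_off {ι R : Type*} [Fintype ι] [DecidableEq ι]
    [CommRing R] (x y : ι → R) (i₀ : ι) (h : ∀ j ≠ i₀, y j = x j) :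
    ∏ i, x i - ∏ i, y i = ∑ i, (x i - y i) * ∏ j ∈ univ.erase i, x j := by
  rw [sum_eq_single i₀ (fun j _ hj => by rw [h j hj, sub_self, zero_mul]) (by simp),
    ← mul_prod_erase univ x (mem_univ i₀), ← mul_prod_erase univ y (mem_univ i₀),
    prod_congr rfl fun j hj => h j (ne_of_mem_erase hj)]
  ring

theorem Finset.sum_sum_erase_comm {ι M : Type*} [Fintype ι] [DecidableEq ι] [AddCommGroup M]
    (F : ι → ι → M) :
    ∑ i, ∑ j ∈ univ.erase i, F i j = ∑ i, ∑ j ∈ univ.erase i, F j i := by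
  simp only [sum_erase_eq_sub (mem_univ _)]
  rw [sum_sub_distrib, sum_sub_distrib, sum_comm]

theorem Finset.Nat.sum_le_of_mem_antidiagonalTuple {n d : ℕ} {β : Fin n → ℕ}
    (hβ : β ∈ antidiagonalTuple n d) (s : Finset (Fin n)) : ∑ k ∈ s, β k ≤ d :=
  mem_antidiagonalTuple.1 hβ ▸ sum_le_sum_of_subset (subset_univ s)

namespace CubicExponent

variable {n : ℕ} {β : Fin n → ℕ}

theorem le_one_of_two_le (hβ : β ∈ Nat.antidiagonalTuple n 3) {i j : Fin n} (hi : 2 ≤ β i)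
    (hji : j ≠ i) : β j ≤ 1 := by
  have := Nat.sum_le_of_mem_antidiagonalTuple hβ {i, j}
  rw [sum_pair hji.symm] at this
  omega

theorem eq_single_of_eq_three (hβ : β ∈ Nat.antidiagonalTuple n 3) {i : Fin n}
    (hi : β i = 3) : β = Pi.single i 3 := by
  funext k
  rcases eq_or_ne k i with rfl | hki
  · simp [hi]
  · have := Nat.sum_le_of_mem_antidiagonalTuple hβ {i, k}
    rw [sum_pair hki.symm] at this
    simp only [Pi.single_apply, hki, if_false]
    omega

theorem exists_eq_single_two_add_single_one (hβ : β ∈ Nat.antidiagonalTuple n 3) {i : Fin n}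
    (hi : β i = 2) : ∃ j, j ≠ i ∧ β = Pi.single i 2 + Pi.single j 1 := by
  have hsum := Nat.mem_antidiagonalTuple.1 hβ
  rw [← add_sum_erase _ _ (mem_univ i), hi] at hsum
  obtain ⟨j, hj, hj0⟩ := exists_ne_zero_of_sum_ne_zero (s := univ.erase i) (f := β) (by omega)
  have hji := ne_of_mem_erase hj
  refine ⟨j, hji, funext fun k => ?_⟩
  have hpair := Nat.sum_le_of_mem_antidiagonalTuple hβ {i, j}
  rw [sum_pair hji.symm] at hpair
  rcases eq_or_ne k i with rfl | hki
  · simp [hi, hji.symm]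
  rcases eq_or_ne k j with rfl | hkj
  · simp [hki]
    omega
  · have := Nat.sum_le_of_mem_antidiagonalTuple hβ {i, j, k}
    rw [sum_insert (by simp [hji.symm, hki.symm]), sum_pair hkj.symm] at this
    simp [hki, hkj]
    omega

end CubicExponent

variable {n : ℕ}

theorem prod_fall_eq_sub {β : Fin n → ℕ} (hβ : β ∈ Nat.antidiagonalTuple n 3) (α : Fin n → ℝ) :
    ∏ i, fall (α i) (β i) =
      ∏ i, α i ^ β i - ∑ i, (α i ^ β i - fall (α i) (β i)) * ∏ j ∈ univ.erase i, α j ^ β j := by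
  by_cases h : ∃ i₀, 2 ≤ β i₀
  · obtain ⟨i₀, hi₀⟩ := h
    rw [← prod_sub_prod_eq_sum_of_eq_off _ _ i₀ fun j hj =>
      fall_of_le_one _ (CubicExponent.le_one_of_two_le hβ hi₀ hj)]
    ring
  · simp only [not_exists, not_le] at h
    simp [fall_of_le_one _ (Nat.le_of_lt_succ (h _))]

theorem sum_mul_pow_sub_fall_mul_prod_erase (c : (Fin n → ℕ) → ℝ) (α : Fin n → ℝ) (i : Fin n) :
    ∑ β ∈ Nat.antidiagonalTuple n 3,
        c β * ((α i ^ β i - fall (α i) (β i)) * ∏ j ∈ univ.erase i, α j ^ β j) =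
      ∑ j ∈ univ.erase i, c (Pi.single i 2 + Pi.single j 1) * (α i * α j) +
        c (Pi.single i 3) * (3 * α i ^ 2 - 2 * α i) := by
  set F : Finset (Fin n → ℕ) :=
    insert (Pi.single i 3) ((univ.erase i).image fun j => Pi.single i 2 + Pi.single j 1)
  have hF : F ⊆ Nat.antidiagonalTuple n 3 := by
    intro β hβ
    simp only [F, mem_insert, mem_image, mem_erase] at hβ
    rcases hβ with rfl | ⟨j, ⟨hji, -⟩, rfl⟩
    · simp [Nat.mem_antidiagonalTuple]
    · simp [Nat.mem_antidiagonalTuple, sum_add_distrib]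
  -- `α i ^ b - fall (α i) b` vanishes for `b ≤ 1`, so only `3 e_i` and the `2 e_i + e_j` count.
  have hvanish : ∀ β ∈ Nat.antidiagonalTuple n 3, β ∉ F →
      c β * ((α i ^ β i - fall (α i) (β i)) * ∏ j ∈ univ.erase i, α j ^ β j) = 0 := by
    intro β hβ hβF
    have : β i ≤ 1 := by
      by_contra! h
      have := Nat.sum_le_of_mem_antidiagonalTuple hβ {i}
      rw [sum_singleton] at this
      interval_cases hi : β i
      · obtain ⟨j, hji, rfl⟩ := CubicExponent.exists_eq_single_two_add_single_one hβ hi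
        exact hβF (mem_insert_of_mem (mem_image_of_mem _ (mem_erase.2 ⟨hji, mem_univ j⟩)))
      · exact hβF (CubicExponent.eq_single_of_eq_three hβ hi ▸ mem_insert_self _ _)
    rw [fall_of_le_one _ this, sub_self, zero_mul, mul_zero]
  rw [← sum_subset hF hvanish, sum_insert, sum_image, add_comm]
  · congr 1
    · refine sum_congr rfl fun j hj => ?_
      have hji := ne_of_mem_erase hj
      have hi : (Pi.single i 2 + Pi.single j 1 : Fin n → ℕ) i = 2 := by simp [hji.symm]
      have hj' : (Pi.single i 2 + Pi.single j 1 : Fin n → ℕ) j = 1 := by simp [hji]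
      rw [prod_eq_single_of_mem j hj fun k hk hkj => by simp [ne_of_mem_erase hk, hkj], hi, hj',
        fall_two]
      ring
    · rw [prod_eq_one fun k hk => by simp [ne_of_mem_erase hk], Pi.single_eq_same, fall_three]
      ring
  · intro j hj j' hj' h
    simpa [ne_of_mem_erase hj, Pi.single_apply] using congrFun h j
  · simp only [mem_image, mem_erase, not_exists, not_and]
    intro j ⟨hji, _⟩ h
    simpa [Pi.single_apply, hji.symm] using congrFun h i

def polyaLinearTerm (c : (Fin n → ℕ) → ℝ) (x : Fin n → ℝ) : ℝ :=
  ∑ i, c (Pi.single i 3) * x i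

def polyaQuadraticTerm (c : (Fin n → ℕ) → ℝ) (x : Fin n → ℝ) : ℝ :=
  ∑ i, (∑ j ∈ univ.erase i, c (Pi.single i 2 + Pi.single j 1) * (x i * x j) +
    3 * c (Pi.single i 3) * x i ^ 2)

theorem sum_mul_prod_fall_eq (c : (Fin n → ℕ) → ℝ) (α : Fin n → ℝ) :
    ∑ β ∈ Nat.antidiagonalTuple n 3, c β * ∏ i, fall (α i) (β i) =
      homPoly n 3 c α - polyaQuadraticTerm c α + 2 * polyaLinearTerm c α := by
  rw [sum_congr rfl fun β hβ => by rw [prod_fall_eq_sub hβ, mul_sub, mul_sum], sum_sub_distrib,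
    sum_comm, sum_congr rfl fun i _ => sum_mul_pow_sub_fall_mul_prod_erase c α i, homPoly,
    polyaQuadraticTerm, polyaLinearTerm, mul_sum]
  rw [sub_add, ← sum_sub_distrib]
  congr 2 with i
  ring

theorem homPoly_smul {d : ℕ} (c : (Fin n → ℕ) → ℝ) (t : ℝ) (x : Fin n → ℝ) :
    homPoly n d c (t • x) = t ^ d * homPoly n d c x := by
  rw [homPoly, homPoly, mul_sum]
  refine sum_congr rfl fun β hβ => ?_
  simp only [Pi.smul_apply, smul_eq_mul, mul_pow, prod_mul_distrib, prod_pow_eq_pow_sum,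
    Nat.mem_antidiagonalTuple.1 hβ]
  ring

theorem polyaQuadraticTerm_smul (c : (Fin n → ℕ) → ℝ) (t : ℝ) (x : Fin n → ℝ) :
    polyaQuadraticTerm c (t • x) = t ^ 2 * polyaQuadraticTerm c x := by
  simp only [polyaQuadraticTerm, Pi.smul_apply, smul_eq_mul, mul_sum, mul_add]
  congr! 2
  · exact sum_congr rfl fun j _ => by ring
  · ring

theorem polyaLinearTerm_smul (c : (Fin n → ℕ) → ℝ) (t : ℝ) (x : Fin n → ℝ) :
    polyaLinearTerm c (t • x) = t * polyaLinearTerm c x := by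
  simp only [polyaLinearTerm, Pi.smul_apply, smul_eq_mul, mul_sum]
  exact sum_congr rfl fun i _ => by ring

theorem homPoly_single {d : ℕ} (c : (Fin n → ℕ) → ℝ) (i : Fin n) (s : ℝ) :
    homPoly n d c (Pi.single i s) = c (Pi.single i d) * s ^ d := by
  rw [homPoly, sum_eq_single_of_mem (Pi.single i d) (by simp [Nat.mem_antidiagonalTuple])]
  · rw [prod_eq_single_of_mem i (mem_univ i) fun k _ hki => by simp [hki]]
    simp
  · intro β hβ hne
    obtain ⟨k, hki, hk⟩ : ∃ k ≠ i, β k ≠ 0 := by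
      by_contra! h
      refine hne (funext fun k => ?_)
      rcases eq_or_ne k i with rfl | hki
      · rw [Pi.single_eq_same, ← Nat.mem_antidiagonalTuple.1 hβ,
          sum_eq_single_of_mem k (mem_univ k) fun j _ => h j]
      · simp [hki, h k hki]
    rw [prod_eq_zero (mem_univ k) (by simp [hki, hk]), mul_zero]

theorem homPoly_single_add_single {d : ℕ} (c : (Fin n → ℕ) → ℝ) {i j : Fin n} (hij : i ≠ j)
    (s t : ℝ) :
    homPoly n d c (Pi.single i s + Pi.single j t) =
      ∑ p ∈ antidiagonal d, c (Pi.single i p.1 + Pi.single j p.2) * (s ^ p.1 * t ^ p.2) := by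
  set e : ℕ × ℕ → (Fin n → ℕ) := fun p => Pi.single i p.1 + Pi.single j p.2
  have hinj : Set.InjOn e (antidiagonal d) := by
    intro p _ q _ h
    have hi := congrFun h i
    have hj := congrFun h j
    simp [e, hij, hij.symm] at hi hj
    exact Prod.ext hi hj
  have hsub : (antidiagonal d).image e ⊆ Nat.antidiagonalTuple n d := by
    intro β hβ
    obtain ⟨p, hp, rfl⟩ := mem_image.1 hβ
    simpa [e, Nat.mem_antidiagonalTuple, sum_add_distrib] using hp
  have hvanish : ∀ β ∈ Nat.antidiagonalTuple n d, β ∉ (antidiagonal d).image e →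
      c β * ∏ k, (Pi.single i s + Pi.single j t : Fin n → ℝ) k ^ β k = 0 := by
    intro β hβ hne
    obtain ⟨k, hki, hkj, hk⟩ : ∃ k, k ≠ i ∧ k ≠ j ∧ β k ≠ 0 := by
      by_contra! h
      refine hne (mem_image.2 ⟨(β i, β j), ?_, funext fun k => ?_⟩)
      · rw [HasAntidiagonal.mem_antidiagonal, ← Nat.mem_antidiagonalTuple.1 hβ,
          Fintype.sum_eq_add i j hij fun k hk => h k hk.1 hk.2]
      · rcases eq_or_ne k i with rfl | hki
        · simp [e, hij]
        rcases eq_or_ne k j with rfl | hkj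
        · simp [e, hki]
        · simp [e, hki, hkj, h k hki hkj]
    rw [prod_eq_zero (mem_univ k) (by simp [hki, hkj, hk]), mul_zero]
  rw [homPoly, ← sum_subset hsub hvanish, sum_image hinj]
  refine sum_congr rfl fun p _ => ?_
  rw [Fintype.prod_eq_mul i j hij fun k hk => by simp [e, hk.1, hk.2]]
  simp [e, hij, hij.symm]

theorem minSimplex_le_homPoly {d : ℕ} (c : (Fin n → ℕ) → ℝ) {x : Fin n → ℝ}
    (hx : x ∈ stdSimplex ℝ (Fin n)) : minSimplex n (homPoly n d c) ≤ homPoly n d c x :=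
  csInf_le ((isCompact_stdSimplex ℝ (Fin n)).image (by unfold homPoly; fun_prop)).bddBelow
    ⟨x, hx, rfl⟩

theorem homPoly_le_maxSimplex {d : ℕ} (c : (Fin n → ℕ) → ℝ) {x : Fin n → ℝ}
    (hx : x ∈ stdSimplex ℝ (Fin n)) : homPoly n d c x ≤ maxSimplex n (homPoly n d c) :=
  le_csSup ((isCompact_stdSimplex ℝ (Fin n)).image (by unfold homPoly; fun_prop)).bddAbove
    ⟨x, hx, rfl⟩

theorem single_add_single_mem_stdSimplex (i j : Fin n) :
    (Pi.single i (1 / 2) + Pi.single j (1 / 2) : Fin n → ℝ) ∈ stdSimplex ℝ (Fin n) := by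
  refine ⟨fun k => ?_, ?_⟩
  · simp only [Pi.add_apply, Pi.single_apply]
    split_ifs <;> norm_num
  · simp [sum_add_distrib]
    norm_num

theorem coeff_single_le_maxSimplex {d : ℕ} (c : (Fin n → ℕ) → ℝ) (i : Fin n) :
    c (Pi.single i d) ≤ maxSimplex n (homPoly n d c) := by
  simpa [homPoly_single] using homPoly_le_maxSimplex c (single_mem_stdSimplex ℝ i)

theorem minSimplex_le_coeff_single {d : ℕ} (c : (Fin n → ℕ) → ℝ) (i : Fin n) :
    minSimplex n (homPoly n d c) ≤ c (Pi.single i d) := by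
  simpa [homPoly_single] using minSimplex_le_homPoly c (single_mem_stdSimplex ℝ i)

theorem edge_coeffs_sum_le_maxSimplex (c : (Fin n → ℕ) → ℝ) {i j : Fin n} (hij : i ≠ j) :
    c (Pi.single i 3) + c (Pi.single j 3) + c (Pi.single i 2 + Pi.single j 1) +
      c (Pi.single j 2 + Pi.single i 1) ≤ 8 * maxSimplex n (homPoly n 3 c) := by
  have := homPoly_le_maxSimplex (d := 3) c (single_add_single_mem_stdSimplex i j)
  simp [homPoly_single_add_single c hij, Nat.sum_antidiagonal_succ,
    add_comm (Pi.single i 1)] at this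
  linarith

theorem sum_sum_erase_mul_add_le {ι : Type*} [Fintype ι] [DecidableEq ι] {a : ι → ℝ}
    {b : ι → ι → ℝ} {m M : ℝ} (ham : ∀ i, m ≤ a i) (haM : ∀ i, a i ≤ M)
    (hb : ∀ i j, i ≠ j → a i + a j + b i j + b j i ≤ 8 * M) {x : ι → ℝ}
    (hx : x ∈ stdSimplex ℝ ι) :
    ∑ i, (∑ j ∈ univ.erase i, b i j * (x i * x j) + 3 * a i * x i ^ 2) ≤ 4 * M - m := by
  obtain ⟨hx0, hx1⟩ := hx
  -- Only the sums `b i j + b j i` are controlled, so symmetrise the off-diagonal part first.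
  have hsym : 2 * ∑ i, ∑ j ∈ univ.erase i, b i j * (x i * x j) ≤
      ∑ i, ∑ j ∈ univ.erase i, (8 * M - a i - a j) * (x i * x j) := by
    rw [two_mul]
    nth_rewrite 2 [sum_sum_erase_comm]
    rw [← sum_add_distrib]
    refine sum_le_sum fun i _ => ?_
    rw [← sum_add_distrib]
    refine sum_le_sum fun j hj => ?_
    rw [mul_comm (x j), ← add_mul]
    exact mul_le_mul_of_nonneg_right (by linarith [hb i j (ne_of_mem_erase hj).symm])
      (mul_nonneg (hx0 i) (hx0 j))
  have hexpand : ∑ i, ∑ j ∈ univ.erase i, (8 * M - a i - a j) * (x i * x j) =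
      8 * M - 2 * ∑ i, a i * x i - 8 * M * ∑ i, x i ^ 2 + 2 * ∑ i, a i * x i ^ 2 := by
    have hrow : ∀ i, ∑ j ∈ univ.erase i, (8 * M - a i - a j) * (x i * x j) =
        (8 * M - a i) * x i - x i * ∑ j, a j * x j - (8 * M - 2 * a i) * x i ^ 2 := fun i => by
      rw [sum_erase_eq_sub (mem_univ i), sum_congr rfl fun j _ => show
        (8 * M - a i - a j) * (x i * x j) = (8 * M - a i) * x i * x j - x i * (a j * x j) by ring,
        sum_sub_distrib, ← mul_sum, ← mul_sum, hx1]
      ring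
    rw [sum_congr rfl fun i _ => hrow i]
    simp only [sum_sub_distrib, sub_mul, mul_assoc, ← sum_mul, ← mul_sum, hx1]
    ring
  have hlin : m ≤ ∑ i, a i * x i := by
    calc m = ∑ i, m * x i := by rw [← mul_sum, hx1, mul_one]
      _ ≤ ∑ i, a i * x i := sum_le_sum fun i _ => mul_le_mul_of_nonneg_right (ham i) (hx0 i)
  have hsq : ∑ i, a i * x i ^ 2 ≤ M * ∑ i, x i ^ 2 := by
    rw [mul_sum]
    exact sum_le_sum fun i _ => mul_le_mul_of_nonneg_right (haM i) (sq_nonneg _)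
  rw [sum_add_distrib]
  simp only [mul_assoc, ← mul_sum] at hsym hexpand ⊢
  linarith

theorem minSimplex_le_polyaLinearTerm (c : (Fin n → ℕ) → ℝ) {x : Fin n → ℝ}
    (hx : x ∈ stdSimplex ℝ (Fin n)) :
    minSimplex n (homPoly n 3 c) ≤ polyaLinearTerm c x :=
  calc minSimplex n (homPoly n 3 c) = ∑ i, minSimplex n (homPoly n 3 c) * x i := by
        rw [← mul_sum, hx.2, mul_one]
    _ ≤ polyaLinearTerm c x := sum_le_sum fun i _ =>
        mul_le_mul_of_nonneg_right (minSimplex_le_coeff_single c i) (hx.1 i)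

theorem polyaQuadraticTerm_le (c : (Fin n → ℕ) → ℝ) {x : Fin n → ℝ}
    (hx : x ∈ stdSimplex ℝ (Fin n)) :
    polyaQuadraticTerm c x ≤
      4 * maxSimplex n (homPoly n 3 c) - minSimplex n (homPoly n 3 c) :=
  sum_sum_erase_mul_add_le (minSimplex_le_coeff_single c) (coeff_single_le_maxSimplex c)
    (fun _ _ hij => edge_coeffs_sum_le_maxSimplex c hij) hx

theorem le_polyaNumerator_div {r : ℕ} (hr : 3 ≤ r) (c : (Fin n → ℕ) → ℝ) {α : Fin n → ℕ}
    (hα : ∑ i, α i = r) :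
    minSimplex n (homPoly n 3 c) - 4 * (r : ℝ) / (((r : ℝ) - 1) * ((r : ℝ) - 2)) *
        (maxSimplex n (homPoly n 3 c) - minSimplex n (homPoly n 3 c)) ≤
      (∑ β ∈ Nat.antidiagonalTuple n 3, c β * ∏ i, fall (α i : ℝ) (β i)) / fall (r : ℝ) 3 := by
  set m := minSimplex n (homPoly n 3 c)
  set M := maxSimplex n (homPoly n 3 c)
  have hr0 : (0 : ℝ) < r := by positivity
  have hr1 : (0 : ℝ) < r - 1 := by linarith [show (3 : ℝ) ≤ r by exact_mod_cast hr]
  have hr2 : (0 : ℝ) < r - 2 := by linarith [show (3 : ℝ) ≤ r by exact_mod_cast hr]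
  set x : Fin n → ℝ := fun i => α i / r
  have hx : x ∈ stdSimplex ℝ (Fin n) := by
    refine ⟨fun i => by positivity, ?_⟩
    rw [← sum_div, ← Nat.cast_sum, hα, div_self hr0.ne']
  have hαx : (fun i => (α i : ℝ)) = (r : ℝ) • x := by
    funext i
    simp only [x, Pi.smul_apply, smul_eq_mul]
    field_simp
  rw [sum_mul_prod_fall_eq c (fun i => (α i : ℝ)), hαx, homPoly_smul, polyaQuadraticTerm_smul,
    polyaLinearTerm_smul, fall_three, le_div_iff₀ (by positivity)]
  have hf := minSimplex_le_homPoly (d := 3) c hx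
  have hq := polyaQuadraticTerm_le c hx
  have hL := minSimplex_le_polyaLinearTerm c hx
  have hkey : (m - 4 * r / ((r - 1) * (r - 2)) * (M - m)) * (r * (r - 1) * (r - 2)) =
      r ^ 3 * m - r ^ 2 * (4 * M - m) + 2 * r * m := by
    field_simp
    ring
  rw [hkey]
  linarith [mul_le_mul_of_nonneg_left hf (pow_nonneg hr0.le 3),
    mul_le_mul_of_nonneg_left hq (pow_nonneg hr0.le 2), mul_le_mul_of_nonneg_left hL hr0.le]

/-- for `f` homogeneous cubic and `r ≥ 3`,
`f̲ − f_min^{(r−3)} ≤ (4r/((r−1)(r−2)))(f̄ − f̲)`. -/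
theorem statement7 (n r : ℕ) (hn : 0 < n) (hr : 3 ≤ r) (c : (Fin n → ℕ) → ℝ) :
    minSimplex n (homPoly n 3 c) - polyaBound n 3 r c ≤
      (4 * (r : ℝ) / (((r : ℝ) - 1) * ((r : ℝ) - 2))) *
        (maxSimplex n (homPoly n 3 c) - minSimplex n (homPoly n 3 c)) := by
  have hne : {α : Fin n → ℕ | ∑ i, α i = r}.Nonempty :=
    ⟨Pi.single ⟨0, hn⟩ r, by simp⟩
  rw [polyaBound, sub_le_comm]
  refine le_csInf (hne.image _) ?_
  rintro _ ⟨α, hα, rfl⟩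
  exact le_polyaNumerator_div hr c hα
end
end

section
/- Let n ≥ d ≥ 1 and let f = Σ_{I ⊆ [n], |I| = d} f_I ∏_{i ∈ I} x_i be a square-free (multilinear) homogeneous polynomial of degree d with real coefficients, and let r ≥ d be an integer. Then r^{(d)} · f_min^{(r−d)} = r^d · f_{Δ(n,r)}; in particular f_min^{(r−d)} = (1/r^{(d)}) · min_{α ∈ I(n,r)} f(α). -/
open Finset Pointwise

noncomputable section

/-- The square-free (multilinear) polynomial `f = Σ_{I ⊆ [n], |I| = d} f_I Π_{i ∈ I} x_i`. -/
def sqfreePoly (n d : ℕ) (c : Finset (Fin n) → ℝ) (x : Fin n → ℝ) : ℝ :=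
  ∑ I ∈ Finset.univ.powersetCard d, c I * ∏ i ∈ I, x i

/-- The Pólya-type lower bound `f_min^{(r-d)} = min_{α ∈ I(n,r)} Σ_β f_β α^{(β)} / r^{(d)}`
spelled out for the square-free polynomial `sqfreePoly` (here `α^{(β)} = Π_{i ∈ I} α_i`
when `β` is the indicator vector of `I`). -/
def sqfreePolya (n d r : ℕ) (c : Finset (Fin n) → ℝ) : ℝ :=
  sInf ((fun α : Fin n → ℕ =>
      (∑ I ∈ Finset.univ.powersetCard d, c I * ∏ i ∈ I, ((α i : ℕ) : ℝ)) / fall (r : ℝ) d) ''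
    {α : Fin n → ℕ | ∑ i, α i = r})

lemma fall_pos (r d : ℕ) (h : d ≤ r) : 0 < fall (r : ℝ) d := by
  induction d with
  | zero => simp [fall]
  | succ k ih =>
    have hk : k ≤ r := Nat.le_of_succ_le h
    have : (k : ℝ) < r := by exact_mod_cast h
    have := ih hk
    simp only [fall]
    nlinarith

lemma homog (n d : ℕ) (c : Finset (Fin n) → ℝ) (t : ℝ) (ht : t ≠ 0) (y : Fin n → ℝ) :
    sqfreePoly n d c (fun i => y i / t) = (t ^ d)⁻¹ * sqfreePoly n d c y := by
  unfold sqfreePoly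
  rw [Finset.mul_sum]
  refine Finset.sum_congr rfl fun I hI => ?_
  have hcard : I.card = d := (Finset.mem_powersetCard.mp hI).2
  rw [Finset.prod_div_distrib, Finset.prod_const, hcard]
  field_simp

/-- for a square-free `f` of degree `d`, `1 ≤ d ≤ n` and `r ≥ d`,
`r^{(d)} f_min^{(r−d)} = r^d f_{Δ(n,r)}`; in particular
`f_min^{(r−d)} = (1/r^{(d)}) min_{α ∈ I(n,r)} f(α)`. -/
theorem statement10 (n d r : ℕ) (hd : 1 ≤ d) (hdn : d ≤ n) (hr : d ≤ r)
    (c : Finset (Fin n) → ℝ) :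
    fall (r : ℝ) d * sqfreePolya n d r c = (r : ℝ) ^ d * minGrid n r (sqfreePoly n d c) ∧
      sqfreePolya n d r c =
        (1 / fall (r : ℝ) d) *
          sInf ((fun α : Fin n → ℕ => sqfreePoly n d c (fun i => ((α i : ℕ) : ℝ))) ''
            {α : Fin n → ℕ | ∑ i, α i = r}) := by
  have hrpos : 0 < r := lt_of_lt_of_le hd hr
  have hrR : (0 : ℝ) < r := by exact_mod_cast hrpos
  have hF : 0 < fall (r : ℝ) d := fall_pos r d hr
  set S : Set ℝ := ((fun α : Fin n → ℕ => sqfreePoly n d c (fun i => ((α i : ℕ) : ℝ))) ''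
      {α : Fin n → ℕ | ∑ i, α i = r}) with hS
  -- sqfreePolya is sInf of (fall)⁻¹ • S
  have hpoly : sqfreePolya n d r c = (fall (r : ℝ) d)⁻¹ * sInf S := by
    have himg : ((fun α : Fin n → ℕ =>
        (∑ I ∈ Finset.univ.powersetCard d, c I * ∏ i ∈ I, ((α i : ℕ) : ℝ)) / fall (r : ℝ) d) ''
        {α : Fin n → ℕ | ∑ i, α i = r}) = (fall (r : ℝ) d)⁻¹ • S := by
      rw [hS, ← Set.image_smul, Set.image_image]
      refine Set.image_congr fun α _ => ?_
      simp [sqfreePoly, smul_eq_mul, div_eq_inv_mul]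
    rw [sqfreePolya, himg, Real.sInf_smul_of_nonneg (le_of_lt (inv_pos.mpr hF))]
    simp [smul_eq_mul]
  -- the grid image equals (r^d)⁻¹ • S
  have hgrid : (sqfreePoly n d c) '' regularGrid n r = ((r : ℝ) ^ d)⁻¹ • S := by
    ext v
    constructor
    · rintro ⟨x, ⟨hx, hint⟩, rfl⟩
      choose α hα using hint
      have hx1 : ∀ i, x i = (α i : ℝ) / r := fun i => by
        field_simp; linarith [hα i]
      have hsum : ∑ i, α i = r := by
        have : ((∑ i, α i : ℕ) : ℝ) = (r : ℝ) := by
          push_cast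
          calc (∑ i, (α i : ℝ)) = ∑ i, (r : ℝ) * x i := by
                refine Finset.sum_congr rfl fun i _ => (hα i).symm
            _ = (r : ℝ) * ∑ i, x i := by rw [Finset.mul_sum]
            _ = (r : ℝ) := by rw [hx.2, mul_one]
        exact_mod_cast this
      refine ⟨sqfreePoly n d c (fun i => ((α i : ℕ) : ℝ)), ⟨α, hsum, rfl⟩, ?_⟩
      have : x = fun i => (α i : ℝ) / r := funext hx1
      rw [this, homog n d c (r : ℝ) (ne_of_gt hrR)]
      simp [smul_eq_mul]
    · rintro ⟨s, ⟨α, hα, rfl⟩, rfl⟩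
      refine ⟨fun i => (α i : ℝ) / r, ⟨⟨fun i => div_nonneg (Nat.cast_nonneg _) (le_of_lt hrR), ?_⟩,
        fun i => ⟨α i, by field_simp⟩⟩, ?_⟩
      · rw [← Finset.sum_div]
        have : (∑ i, ((α i : ℕ) : ℝ)) = (r : ℝ) := by
          rw [← Nat.cast_sum]; exact_mod_cast congrArg (Nat.cast : ℕ → ℝ) hα
        rw [this]; field_simp
      · rw [homog n d c (r : ℝ) (ne_of_gt hrR)]
        simp [smul_eq_mul]
  have hmin : minGrid n r (sqfreePoly n d c) = ((r : ℝ) ^ d)⁻¹ * sInf S := by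
    rw [minGrid, hgrid, Real.sInf_smul_of_nonneg (by positivity)]
    simp [smul_eq_mul]
  constructor
  · rw [hpoly, hmin]
    field_simp
  · rw [hpoly, one_div]
end
end
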